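/- arXiv:2106.04399 — 8 statements merged into one kernel-verified Lean document; each statement's English description precedes it below -/
import Mathlib

section
/- Suppose F is a surjective map from complete action sequences to terminal states, and a policy is defined on the tree of action sequences via V(ā) = Σ_{continuations b̄} R(F(ā + b̄)) with π choosing continuations proportional to V. If each terminal state x has n(x) distinct action sequences mapping to it, then the probability of generating x is n(x)·R(x) / Σ_{x'} n(x')·R(x'). -/
/-- Telescoping product of ratios over a range. -/
lemma tele_prod_div (f : ℕ → ℝ) (n : ℕ) (h : ∀ i ≤ n, f i ≠ 0) :
    ∏ i ∈ Finset.range n, f (i + 1) / f i = f n / f 0 := by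
  induction n with
  | zero => simp [div_self (h 0 le_rfl)]
  | succ n ih =>
    rw [Finset.prod_range_succ, ih (fun i hi => h i (hi.trans n.le_succ)),
      div_mul_div_comm, mul_comm (f 0) (f n),
      mul_div_mul_left _ _ (h n n.le_succ)]

/-- If `p` is a proper prefix of `ℓ`, then `p ++ [a]` is a prefix of `ℓ` for some `a`. -/
lemma exists_snoc_prefix {A : Type*} {p ℓ : List A} (hpre : p <+: ℓ) (hne : p ≠ ℓ) :
    ∃ a : A, p ++ [a] <+: ℓ := by
  obtain ⟨t, ht⟩ := hpre
  cases t with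
  | nil => simp at ht; exact absurd ht hne
  | cons a t' => exact ⟨a, t', by simp [← ht]⟩

/-- Let `F` be a surjective map from the complete action sequences
(leaves of a finite prefix-closed tree `T` of action sequences) to terminal states `X`
with rewards `R x > 0`.  Define `V p = ∑ (leaves ℓ extending p), R (F ℓ)` and the
policy `π(a|p) = V (p ++ [a]) / ∑ b, V (p ++ [b])`, so that the probability of
generating a leaf is the product of the transition probabilities along its path.  If
`n x` denotes the number of distinct action sequences (leaves) mapping to `x`, then the
probability of generating `x` is `n x · R x / ∑ x', n x' · R x'`. -/
theorem surjective_tree_policy_bias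
    {A : Type*} [Fintype A] [DecidableEq A] {X : Type*} [Fintype X] [DecidableEq X]
    (T : Finset (List A)) (hroot : ([] : List A) ∈ T)
    (hpc : ∀ q ∈ T, ∀ p : List A, p <+: q → p ∈ T)
    (F : List A → X)
    (R : X → ℝ) (hR : ∀ x : X, 0 < R x)
    (hsurj : ∀ x : X, ∃ ℓ ∈ T.filter (fun ℓ => ∀ a : A, ℓ ++ [a] ∉ T), F ℓ = x)
    (V : List A → ℝ)
    (hV : ∀ p ∈ T, V p =
      ∑ ℓ ∈ (T.filter (fun ℓ => ∀ a : A, ℓ ++ [a] ∉ T)).filter (fun ℓ => p <+: ℓ),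
        R (F ℓ))
    (x : X) :
    (∑ ℓ ∈ (T.filter (fun ℓ => ∀ a : A, ℓ ++ [a] ∉ T)).filter (fun ℓ => F ℓ = x),
        ∏ i ∈ Finset.range ℓ.length,
          V (ℓ.take (i + 1)) /
            ∑ a ∈ Finset.univ.filter (fun a : A => ℓ.take i ++ [a] ∈ T),
              V (ℓ.take i ++ [a]))
      = (((T.filter (fun ℓ => ∀ a : A, ℓ ++ [a] ∉ T)).filter
            (fun ℓ => F ℓ = x)).card : ℝ) * R x /
        ∑ x' : X,
          (((T.filter (fun ℓ => ∀ a : A, ℓ ++ [a] ∉ T)).filter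
            (fun ℓ => F ℓ = x')).card : ℝ) * R x' := by
  classical
  set L : Finset (List A) := T.filter (fun ℓ => ∀ a : A, ℓ ++ [a] ∉ T) with hLdef
  have hLmem : ∀ ℓ ∈ L, ℓ ∈ T ∧ ∀ a : A, ℓ ++ [a] ∉ T := by
    intro ℓ hℓ
    simpa [hLdef] using hℓ
  -- A leaf has no proper extension that is a leaf.
  have hleaf_ext : ∀ ℓ ∈ L, ∀ ℓ' ∈ L, ℓ <+: ℓ' → ℓ = ℓ' := by
    intro ℓ hℓ ℓ' hℓ' hpre
    by_contra hne
    obtain ⟨a, ha⟩ := exists_snoc_prefix hpre hne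
    exact (hLmem ℓ hℓ).2 a (hpc ℓ' (hLmem ℓ' hℓ').1 _ ha)
  -- V of a leaf is the reward of its image.
  have hVleaf : ∀ ℓ ∈ L, V ℓ = R (F ℓ) := by
    intro ℓ hℓ
    rw [hV ℓ (hLmem ℓ hℓ).1]
    have : L.filter (fun ℓ' => ℓ <+: ℓ') = {ℓ} := by
      ext ℓ'
      simp only [Finset.mem_filter, Finset.mem_singleton]
      constructor
      · rintro ⟨h1, h2⟩
        exact (hleaf_ext ℓ hℓ ℓ' h1 h2).symm
      · rintro rfl
        exact ⟨hℓ, List.prefix_refl _⟩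
    rw [this, Finset.sum_singleton]
  -- V is positive on prefixes of leaves.
  have hVpos : ∀ ℓ ∈ L, ∀ p : List A, p <+: ℓ → 0 < V p := by
    intro ℓ hℓ p hp
    rw [hV p (hpc ℓ (hLmem ℓ hℓ).1 p hp)]
    refine Finset.sum_pos (fun ℓ' _ => hR (F ℓ')) ⟨ℓ, ?_⟩
    exact Finset.mem_filter.2 ⟨hℓ, hp⟩
  -- Branching decomposition of V at a non-leaf node.
  have hVsum : ∀ p ∈ T, p ∉ L →
      (∑ a ∈ Finset.univ.filter (fun a : A => p ++ [a] ∈ T), V (p ++ [a])) = V p := by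
    intro p hp hpL
    have hVa : ∀ a ∈ Finset.univ.filter (fun a : A => p ++ [a] ∈ T),
        V (p ++ [a]) = ∑ ℓ ∈ L.filter (fun ℓ => p ++ [a] <+: ℓ), R (F ℓ) := by
      intro a ha
      exact hV _ (Finset.mem_filter.1 ha).2
    rw [Finset.sum_congr rfl hVa, hV p hp]
    rw [← Finset.sum_biUnion]
    · congr 1
      ext ℓ
      simp only [Finset.mem_biUnion, Finset.mem_filter, Finset.mem_univ, true_and]
      constructor
      · rintro ⟨a, _, hℓL, hpre⟩
        exact ⟨hℓL, ((p.prefix_append [a]).trans hpre)⟩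
      · rintro ⟨hℓL, hpre⟩
        have hne : p ≠ ℓ := by rintro rfl; exact hpL hℓL
        obtain ⟨a, ha⟩ := exists_snoc_prefix hpre hne
        exact ⟨a, hpc ℓ (hLmem ℓ hℓL).1 _ ha, hℓL, ha⟩
    · intro a _ b _ hab
      refine Finset.disjoint_left.2 fun ℓ hℓa hℓb => hab ?_
      obtain ⟨-, ta, hta⟩ := Finset.mem_filter.1 hℓa
      obtain ⟨-, tb, htb⟩ := Finset.mem_filter.1 hℓb
      simp only [List.append_assoc, List.singleton_append] at hta htb
      have h2 : a :: ta = b :: tb := List.append_cancel_left (hta.trans htb.symm)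
      exact (List.cons.injEq _ _ _ _ ▸ h2).1
  -- Each summand equals R x / V [].
  have hterm : ∀ ℓ ∈ L.filter (fun ℓ => F ℓ = x),
      (∏ i ∈ Finset.range ℓ.length,
        V (ℓ.take (i + 1)) /
          ∑ a ∈ Finset.univ.filter (fun a : A => ℓ.take i ++ [a] ∈ T),
            V (ℓ.take i ++ [a])) = R x / V [] := by
    intro ℓ hℓx
    obtain ⟨hℓL, hFx⟩ := Finset.mem_filter.1 hℓx
    have htake : ∀ i ≤ ℓ.length, ℓ.take i <+: ℓ := fun i _ => List.take_prefix i ℓ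
    have hprod : (∏ i ∈ Finset.range ℓ.length,
        V (ℓ.take (i + 1)) /
          ∑ a ∈ Finset.univ.filter (fun a : A => ℓ.take i ++ [a] ∈ T),
            V (ℓ.take i ++ [a]))
        = ∏ i ∈ Finset.range ℓ.length, V (ℓ.take (i + 1)) / V (ℓ.take i) := by
      refine Finset.prod_congr rfl fun i hi => ?_
      have hi' : i < ℓ.length := Finset.mem_range.1 hi
      have hsnoc : ℓ.take i ++ [ℓ.get ⟨i, hi'⟩] = ℓ.take (i + 1) := by
        simpa [List.concat_eq_append] using List.take_concat_get ℓ i hi'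
      have hmemT : ℓ.take i ∈ T := hpc ℓ (hLmem ℓ hℓL).1 _ (htake i hi'.le)
      have hnotL : ℓ.take i ∉ L := by
        intro hmem
        have : ℓ.take i ++ [ℓ.get ⟨i, hi'⟩] ∈ T := by
          rw [hsnoc]
          exact hpc ℓ (hLmem ℓ hℓL).1 _ (htake (i + 1) hi')
        exact (hLmem _ hmem).2 _ this
      rw [hVsum _ hmemT hnotL]
    rw [hprod, tele_prod_div (fun i => V (ℓ.take i)) ℓ.length
      (fun i hi => (hVpos ℓ hℓL _ (htake i hi)).ne')]
    rw [List.take_length, List.take_zero, hVleaf ℓ hℓL, hFx]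
  -- The denominator equals V [].
  have hdenom : (∑ x' : X, ((L.filter (fun ℓ => F ℓ = x')).card : ℝ) * R x') = V [] := by
    rw [hV [] hroot]
    have : L.filter (fun ℓ => ([] : List A) <+: ℓ) = L := by
      apply Finset.filter_true_of_mem
      intro ℓ _
      exact ℓ.nil_prefix
    rw [this]
    rw [← Finset.sum_fiberwise L F (fun ℓ => R (F ℓ))]
    refine Finset.sum_congr rfl fun x' _ => ?_
    rw [Finset.sum_congr rfl (fun ℓ hℓ => by
      rw [(Finset.mem_filter.1 hℓ).2]), Finset.sum_const, nsmul_eq_mul]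
  rw [Finset.sum_congr rfl hterm, Finset.sum_const, nsmul_eq_mul, hdenom,
    mul_div_assoc]
end

section
/- Let G be a finite DAG with unique source s₀ and sinks X with rewards R(x) > 0. Suppose a positive edge flow Q satisfies flow conservation: for every non-source node s', Σ_{edges (s,a) into s'} Q(s,a) = R(s') + Σ_{edges out of s'} Q(s',a'), where R(s') = 0 for non-sinks. Define the policy π(a|s) = Q(s,a)/V(s) with V(s) = R(s) + Σ_{a} Q(s,a). Then the probability of visiting any node s under trajectories started at s₀ equals V(s)/V(s₀). -/
/-- Let `G` be a finite DAG (nodes `S`, out-neighbours `succ`) with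
unique source `s₀` (no incoming edges) and sinks (nodes without outgoing edges)
carrying rewards `R x > 0`, `R = 0` elsewhere.  Suppose a positive edge flow `Q`
satisfies flow conservation at every non-source node:
`∑ (edges into s'), Q = R s' + ∑ (edges out of s'), Q`.  Define
`V s = R s + ∑ (s'' ∈ succ s), Q s s''` and the policy `π(s'|s) = Q s s' / V s`, and
let `π s` be the visit probability: `π s₀ = 1` and
`π s' = ∑ (s with s' ∈ succ s), (Q s s' / V s) * π s`.  Then `π s = V s / V s₀` for
every node `s`. -/
theorem dag_flow_visit_prob
    {S : Type*} [Fintype S] [DecidableEq S]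
    (succ : S → Finset S) (s₀ : S)
    (hacyc : ∀ s : S, ¬ Relation.TransGen (fun a b => b ∈ succ a) s s)
    (hsource : ∀ s : S, s₀ ∉ succ s)
    (R : S → ℝ)
    (hRsink : ∀ x : S, succ x = ∅ → 0 < R x)
    (hRnonsink : ∀ s : S, succ s ≠ ∅ → R s = 0)
    (Q : S → S → ℝ)
    (hQpos : ∀ s : S, ∀ s' ∈ succ s, 0 < Q s s')
    (hflow : ∀ s' : S, s' ≠ s₀ →
      ∑ s ∈ Finset.univ.filter (fun s => s' ∈ succ s), Q s s'
        = R s' + ∑ s'' ∈ succ s', Q s' s'')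
    (V : S → ℝ) (hV : ∀ s : S, V s = R s + ∑ s'' ∈ succ s, Q s s'')
    (π : S → ℝ) (hπ₀ : π s₀ = 1)
    (hπ : ∀ s' : S, s' ≠ s₀ →
      π s' = ∑ s ∈ Finset.univ.filter (fun s => s' ∈ succ s), Q s s' / V s * π s) :
    ∀ s : S, π s = V s / V s₀ := by
  have hVpos : ∀ s : S, 0 < V s := by
    intro s
    rw [hV]
    rcases eq_or_ne (succ s) ∅ with h | h
    · simp [h, hRsink s h]
    · rw [hRnonsink s h, zero_add]
      exact Finset.sum_pos (fun i hi => hQpos s i hi) (Finset.nonempty_of_ne_empty h)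
  have hwf : WellFounded (fun a b : S => b ∈ succ a) := by
    have hi : IsIrrefl S (Relation.TransGen (fun a b : S => b ∈ succ a)) := ⟨hacyc⟩
    have hw : WellFounded (Relation.TransGen (fun a b : S => b ∈ succ a)) :=
      Finite.wellFounded_of_trans_of_irrefl _
    exact Subrelation.wf (fun h => Relation.TransGen.single h) hw
  intro s
  induction s using hwf.induction with
  | _ s ih =>
    rcases eq_or_ne s s₀ with rfl | hne
    · rw [hπ₀, div_self (hVpos s).ne']
    · rw [hπ s hne]
      have hterm : ∀ a ∈ Finset.univ.filter (fun a => s ∈ succ a),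
          Q a s / V a * π a = Q a s / V s₀ := by
        intro a ha
        rw [Finset.mem_filter] at ha
        rw [ih a ha.2]
        have h1 : V a ≠ 0 := (hVpos a).ne'
        have h2 : V s₀ ≠ 0 := (hVpos s₀).ne'
        field_simp
      rw [Finset.sum_congr rfl hterm, ← Finset.sum_div, hflow s hne, ← hV]
end

section
/- In a finite DAG flow network with source s₀ and sink rewards R(x) > 0 satisfying the flow matching conditions, the total flow out of the source equals the sum of sink rewards: V(s₀) = Σ_{x sink} R(x). -/
/-- In a finite DAG flow network with unique source `s₀`, sinks with
rewards `R x > 0` (and `R = 0` at non-sinks), and positive edge flows `Q` satisfying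
the flow matching conditions (inflow `= R +` outflow at every non-source node), the
total flow out of the source `V s₀ = R s₀ + ∑ (s'' ∈ succ s₀), Q s₀ s''` equals the
sum of the sink rewards: `V s₀ = ∑ (x sink), R x`. -/
theorem dag_source_flow_eq_total_reward
    {S : Type*} [Fintype S] [DecidableEq S]
    (succ : S → Finset S) (s₀ : S)
    (hacyc : ∀ s : S, ¬ Relation.TransGen (fun a b => b ∈ succ a) s s)
    (hsource : ∀ s : S, s₀ ∉ succ s)
    (R : S → ℝ)
    (hRsink : ∀ x : S, succ x = ∅ → 0 < R x)
    (hRnonsink : ∀ s : S, succ s ≠ ∅ → R s = 0)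
    (Q : S → S → ℝ)
    (hQpos : ∀ s : S, ∀ s' ∈ succ s, 0 < Q s s')
    (hflow : ∀ s' : S, s' ≠ s₀ →
      ∑ s ∈ Finset.univ.filter (fun s => s' ∈ succ s), Q s s'
        = R s' + ∑ s'' ∈ succ s', Q s' s'')
    (V : S → ℝ) (hV : ∀ s : S, V s = R s + ∑ s'' ∈ succ s, Q s s'') :
    V s₀ = ∑ x ∈ Finset.univ.filter (fun x : S => succ x = ∅), R x := by
  classical
  set out : S → ℝ := fun s => ∑ s'' ∈ succ s, Q s s'' with hout
  set inf : S → ℝ := fun s' => ∑ s ∈ Finset.univ.filter (fun s => s' ∈ succ s), Q s s'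
    with hinf
  -- double counting
  have swap : ∑ s : S, out s = ∑ s' : S, inf s' := by
    simp only [hout, hinf]
    have h1 : ∀ s : S, ∑ s'' ∈ succ s, Q s s''
        = ∑ s'' : S, if s'' ∈ succ s then Q s s'' else 0 := by
      intro s
      rw [Finset.sum_ite_mem, Finset.univ_inter]
    have h2 : ∀ s' : S, ∑ s ∈ Finset.univ.filter (fun s => s' ∈ succ s), Q s s'
        = ∑ s : S, if s' ∈ succ s then Q s s' else 0 := by
      intro s'
      rw [Finset.sum_filter]
    simp only [h1, h2]
    exact Finset.sum_comm
  -- inflow at s₀ is zero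
  have hin0 : inf s₀ = 0 := by
    simp only [hinf]
    apply Finset.sum_eq_zero
    intro s hs
    simp only [Finset.mem_filter] at hs
    exact absurd hs.2 (hsource s)
  have key : ∑ s' : S, inf s' = (∑ s : S, R s) - R s₀ + ((∑ s : S, out s) - out s₀) := by
    rw [← Finset.sum_erase_add _ _ (Finset.mem_univ s₀), hin0, add_zero]
    rw [← Finset.sum_erase_add _ R (Finset.mem_univ s₀), ← Finset.sum_erase_add _ out (Finset.mem_univ s₀)]
    have : ∀ s' ∈ Finset.univ.erase s₀, inf s' = R s' + out s' := by
      intro s' hs'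
      exact hflow s' (Finset.ne_of_mem_erase hs')
    rw [Finset.sum_congr rfl this, Finset.sum_add_distrib]
    ring
  have hVs : V s₀ = ∑ s : S, R s := by
    rw [hV s₀]
    have := swap.trans key
    have hout0 : out s₀ = (∑ s : S, R s) - R s₀ := by linarith
    simp only [← hout] at *
    rw [show (∑ s'' ∈ succ s₀, Q s₀ s'') = out s₀ from rfl, hout0]
    ring
  rw [hVs]
  rw [← Finset.sum_filter_add_sum_filter_not Finset.univ (fun x => succ x = ∅) R]
  have : ∑ x ∈ Finset.univ.filter (fun x => ¬ succ x = ∅), R x = 0 :=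
    Finset.sum_eq_zero fun x hx => hRnonsink x (Finset.mem_filter.mp hx).2
  rw [this, add_zero]
end

section
/- In a finite DAG flow network with source s₀, sink rewards R(x) > 0, and positive edge flows Q satisfying flow matching, the policy π(a|s) = Q(s,a)/V(s) generates each sink x with probability exactly R(x)/Σ_{x' sink} R(x'). -/
/-- In a finite DAG flow network with unique source `s₀`, sink rewards
`R x > 0` (`R = 0` at non-sinks), and positive edge flows `Q` satisfying flow matching
at every non-source node, sampling from `s₀` with the policy `π(s'|s) = Q s s' / V s`
(where `V s = R s + ∑ (s'' ∈ succ s), Q s s''`, and the probability `π s` of reaching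
a node satisfies `π s₀ = 1`, `π s' = ∑ (parents s), (Q s s' / V s) · π s`, i.e. the sum
over all `s₀`-to-`s'` paths of the product of transition probabilities) generates each
sink `x` with probability exactly `R x / ∑ (x' sink), R x'`. -/
theorem dag_flow_policy_samples_prop_to_reward
    {S : Type*} [Fintype S] [DecidableEq S]
    (succ : S → Finset S) (s₀ : S)
    (hacyc : ∀ s : S, ¬ Relation.TransGen (fun a b => b ∈ succ a) s s)
    (hsource : ∀ s : S, s₀ ∉ succ s)
    (R : S → ℝ)
    (hRsink : ∀ x : S, succ x = ∅ → 0 < R x)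
    (hRnonsink : ∀ s : S, succ s ≠ ∅ → R s = 0)
    (Q : S → S → ℝ)
    (hQpos : ∀ s : S, ∀ s' ∈ succ s, 0 < Q s s')
    (hflow : ∀ s' : S, s' ≠ s₀ →
      ∑ s ∈ Finset.univ.filter (fun s => s' ∈ succ s), Q s s'
        = R s' + ∑ s'' ∈ succ s', Q s' s'')
    (V : S → ℝ) (hV : ∀ s : S, V s = R s + ∑ s'' ∈ succ s, Q s s'')
    (π : S → ℝ) (hπ₀ : π s₀ = 1)
    (hπ : ∀ s' : S, s' ≠ s₀ →
      π s' = ∑ s ∈ Finset.univ.filter (fun s => s' ∈ succ s), Q s s' / V s * π s) :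
    ∀ x : S, succ x = ∅ →
      π x = R x / ∑ x' ∈ Finset.univ.filter (fun x' : S => succ x' = ∅), R x' := by
  -- V is positive everywhere
  have hVpos : ∀ s : S, 0 < V s := by
    intro s
    rw [hV s]
    by_cases h : succ s = ∅
    · simp [h]; exact hRsink s h
    · rw [hRnonsink s h, zero_add]
      exact Finset.sum_pos (fun s'' hs'' => hQpos s s'' hs'')
        (Finset.nonempty_iff_ne_empty.mpr h)
  -- well-foundedness of the parent relation
  have hwf : WellFounded (fun a b : S => b ∈ succ a) := by
    have H : WellFounded (Relation.TransGen (fun a b : S => b ∈ succ a)) := by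
      have h1 : IsTrans S (Relation.TransGen (fun a b : S => b ∈ succ a)) :=
        ⟨fun _ _ _ => Relation.TransGen.trans⟩
      have h2 : IsIrrefl S (Relation.TransGen (fun a b : S => b ∈ succ a)) := ⟨hacyc⟩
      exact Finite.wellFounded_of_trans_of_irrefl _
    exact Subrelation.wf (fun h => Relation.TransGen.single h) H
  -- π s = V s / V s₀ for all s
  have key : ∀ s : S, π s = V s / V s₀ := by
    intro s
    induction s using hwf.induction with
    | _ s' ih =>
      by_cases h : s' = s₀
      · rw [h, hπ₀, div_self (hVpos s₀).ne']
      · rw [hπ s' h]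
        have : ∀ p ∈ Finset.univ.filter (fun s => s' ∈ succ s),
            Q p s' / V p * π p = Q p s' / V s₀ := by
          intro p hp
          rw [ih p (Finset.mem_filter.mp hp).2]
          have hp1 := (hVpos p).ne'
          have hp2 := (hVpos s₀).ne'
          field_simp
        rw [Finset.sum_congr rfl this, ← Finset.sum_div, hflow s' h, ← hV s']
  -- V s₀ equals the total reward over sinks
  have hswap : (∑ s' : S, ∑ s ∈ Finset.univ.filter (fun s => s' ∈ succ s), Q s s')
      = ∑ s : S, ∑ s'' ∈ succ s, Q s s'' := by
    have : ∀ s : S, ∑ s'' ∈ succ s, Q s s''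
        = ∑ s'' ∈ Finset.univ.filter (fun s'' => s'' ∈ succ s), Q s s'' := by
      intro s
      congr 1
      ext y
      simp
    simp_rw [this, Finset.sum_filter]
    rw [Finset.sum_comm]
  have hIn0 : (∑ s ∈ Finset.univ.filter (fun s => s₀ ∈ succ s), Q s s₀) = 0 := by
    rw [Finset.filter_false_of_mem, Finset.sum_empty]
    intro s _
    exact hsource s
  have hsplitIn := Finset.add_sum_erase Finset.univ
      (fun s' => ∑ s ∈ Finset.univ.filter (fun s => s' ∈ succ s), Q s s')
      (Finset.mem_univ s₀)
  have hsplitOut := Finset.add_sum_erase Finset.univ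
      (fun s => ∑ s'' ∈ succ s, Q s s'') (Finset.mem_univ s₀)
  have herase : ∀ s' ∈ Finset.univ.erase s₀,
      (∑ s ∈ Finset.univ.filter (fun s => s' ∈ succ s), Q s s')
        = R s' + ∑ s'' ∈ succ s', Q s' s'' := by
    intro s' hs'
    exact hflow s' (Finset.ne_of_mem_erase hs')
  have hOut0 : (∑ s'' ∈ succ s₀, Q s₀ s'') = ∑ s' ∈ Finset.univ.erase s₀, R s' := by
    have h1 : (∑ s' ∈ Finset.univ.erase s₀,
        ∑ s ∈ Finset.univ.filter (fun s => s' ∈ succ s), Q s s')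
        = ∑ s' ∈ Finset.univ.erase s₀, (R s' + ∑ s'' ∈ succ s', Q s' s'') :=
      Finset.sum_congr rfl herase
    rw [Finset.sum_add_distrib] at h1
    have h2 := hswap
    rw [← hsplitIn, ← hsplitOut] at h2
    rw [hIn0, zero_add, h1] at h2
    linarith
  have hVs₀ : V s₀ = ∑ x' ∈ Finset.univ.filter (fun x' : S => succ x' = ∅), R x' := by
    rw [hV s₀, hOut0]
    have : R s₀ + ∑ s' ∈ Finset.univ.erase s₀, R s' = ∑ s' : S, R s' :=
      Finset.add_sum_erase Finset.univ R (Finset.mem_univ s₀)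
    rw [this]
    rw [← Finset.sum_filter_add_sum_filter_not Finset.univ (fun x' => succ x' = ∅) R]
    have : (∑ x' ∈ Finset.univ.filter (fun x' : S => ¬ succ x' = ∅), R x') = 0 := by
      apply Finset.sum_eq_zero
      intro x hx
      exact hRnonsink x (Finset.mem_filter.mp hx).2
    rw [this, add_zero]
  intro x hx
  rw [key x, hVs₀, hV x, hx, Finset.sum_empty, add_zero]
end

section
/- In a finite DAG flow network, each sink is reached with probability 1 under the flow-induced policy, i.e., the sink-reaching probabilities sum to 1: Σ_{x sink} π(x) = 1, where π(x) = R(x)/V(s₀). -/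
/-- In a finite DAG flow network (single source `s₀`, sinks with
rewards `R x > 0`, `R = 0` at non-sinks, positive flow `Q` satisfying the flow
conservation conditions, `V s = R s + ∑ Q s ·`), every trajectory from the source ends
at a sink and the events of terminating at distinct sinks are mutually exclusive and
exhaustive; hence the sink-reaching probabilities `π x = R x / V s₀` sum to one:
`∑ (x sink), π x = 1`. -/
theorem dag_flow_sink_probs_sum_to_one
    {S : Type*} [Fintype S] [DecidableEq S]
    (succ : S → Finset S) (s₀ : S)
    (hacyc : ∀ s : S, ¬ Relation.TransGen (fun a b => b ∈ succ a) s s)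
    (hsource : ∀ s : S, s₀ ∉ succ s)
    (R : S → ℝ)
    (hRsink : ∀ x : S, succ x = ∅ → 0 < R x)
    (hRnonsink : ∀ s : S, succ s ≠ ∅ → R s = 0)
    (Q : S → S → ℝ)
    (hQpos : ∀ s : S, ∀ s' ∈ succ s, 0 < Q s s')
    (hflow : ∀ s' : S, s' ≠ s₀ →
      ∑ s ∈ Finset.univ.filter (fun s => s' ∈ succ s), Q s s'
        = R s' + ∑ s'' ∈ succ s', Q s' s'')
    (V : S → ℝ) (hV : ∀ s : S, V s = R s + ∑ s'' ∈ succ s, Q s s'')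
    (π : S → ℝ)
    (hπ : ∀ x : S, succ x = ∅ → π x = R x / V s₀) :
    ∑ x ∈ Finset.univ.filter (fun x : S => succ x = ∅), π x = 1 := by

  classical
  have hVpos : 0 < V s₀ := by
    rw [hV]
    rcases eq_or_ne (succ s₀) ∅ with h | h
    · have h1 := hRsink s₀ h
      simp [h]
      linarith
    · have hR0 : R s₀ = 0 := hRnonsink s₀ h
      have h2 : 0 < ∑ s'' ∈ succ s₀, Q s₀ s'' :=
        Finset.sum_pos (fun i hi => hQpos s₀ i hi) (Finset.nonempty_of_ne_empty h)
      linarith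
  set T := ∑ s : S, ∑ s' ∈ succ s, Q s s' with hT
  have hswap : (∑ s' : S, ∑ s ∈ Finset.univ.filter (fun s => s' ∈ succ s), Q s s') = T := by
    have h1 : ∀ s' : S, ∑ s ∈ Finset.univ.filter (fun s => s' ∈ succ s), Q s s'
        = ∑ s : S, if s' ∈ succ s then Q s s' else 0 := fun s' => by
      rw [Finset.sum_filter]
    have h2 : ∀ s : S, ∑ s' ∈ succ s, Q s s'
        = ∑ s' : S, if s' ∈ succ s then Q s s' else 0 := fun s => by
      rw [Finset.sum_ite_mem, Finset.univ_inter]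
    simp only [h1, hT, Finset.sum_congr rfl (fun s _ => h2 s)]
    exact Finset.sum_comm
  have hs₀mem : s₀ ∈ (Finset.univ : Finset S) := Finset.mem_univ s₀
  have hin0 : ∑ s ∈ Finset.univ.filter (fun s => s₀ ∈ succ s), Q s s₀ = 0 := by
    have : Finset.univ.filter (fun s => s₀ ∈ succ s) = (∅ : Finset S) := by
      ext s; simp [hsource s]
    simp [this]
  have key : ∑ s' ∈ Finset.univ.erase s₀,
      (∑ s ∈ Finset.univ.filter (fun s => s' ∈ succ s), Q s s')
      = ∑ s' ∈ Finset.univ.erase s₀, (R s' + ∑ s'' ∈ succ s', Q s' s'') :=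
    Finset.sum_congr rfl fun s' hs' => hflow s' (Finset.ne_of_mem_erase hs')
  rw [Finset.sum_erase_eq_sub hs₀mem, Finset.sum_erase_eq_sub hs₀mem, hswap, hin0,
    Finset.sum_add_distrib] at key
  have hVsum : V s₀ = ∑ s : S, R s := by
    rw [hV]
    linarith [key]
  have hRsum : ∑ s : S, R s = ∑ x ∈ Finset.univ.filter (fun x : S => succ x = ∅), R x := by
    refine (Finset.sum_subset (Finset.filter_subset _ _) ?_).symm
    intro x _ hx
    simp only [Finset.mem_filter, Finset.mem_univ, true_and] at hx
    exact hRnonsink x hx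
  calc ∑ x ∈ Finset.univ.filter (fun x : S => succ x = ∅), π x
      = ∑ x ∈ Finset.univ.filter (fun x : S => succ x = ∅), R x / V s₀ :=
        Finset.sum_congr rfl fun x hx => hπ x (Finset.mem_filter.mp hx).2
    _ = (∑ x ∈ Finset.univ.filter (fun x : S => succ x = ∅), R x) / V s₀ := by
        rw [Finset.sum_div]
    _ = 1 := by rw [← hRsum, ← hVsum]; exact div_self hVpos.ne'
end

section
/- Consider the per-trajectory loss L(τ) = Σ_{s'∈τ, s'≠s₀} (Σ_{inflow} Q(s,a) − R(s') − Σ_{outflow} Q(s',a'))². If a flow function Q achieves L(τ) = 0 for every trajectory τ passing through every non-source node of the DAG, then Q satisfies the flow matching conditions at every node, and hence the induced policy samples each sink x with probability R(x)/Σ R(x'). -/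
lemma sum_map_sq_eq_zero_aux {α : Type*} (l : List α) (f : α → ℝ)
    (h : (l.map (fun a => f a ^ 2)).sum = 0) : ∀ a ∈ l, f a = 0 := by
  induction l with
  | nil => simp
  | cons a t ih =>
    simp only [List.map_cons, List.sum_cons] at h
    have ht : (0:ℝ) ≤ (t.map (fun a => f a ^ 2)).sum := by
      apply List.sum_nonneg; intro x hx
      simp only [List.mem_map] at hx
      obtain ⟨y, _, rfl⟩ := hx; exact sq_nonneg _
    have ha : (0:ℝ) ≤ f a ^ 2 := sq_nonneg _
    have h1 : f a ^ 2 = 0 := by linarith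
    have h2 : (t.map (fun a => f a ^ 2)).sum = 0 := by linarith
    intro x hx
    rcases List.mem_cons.mp hx with rfl | hx
    · exact pow_eq_zero_iff (by norm_num) |>.mp h1
    · exact ih h2 x hx

/-- Consider the per-trajectory loss
`L(τ) = ∑ (s' ∈ τ, s' ≠ s₀), (inflow s' − R s' − outflow s')²`, where trajectories are
directed paths from the source `s₀` of a finite DAG to a sink.  If a (positive) flow
`Q` achieves `L(τ) = 0` for every trajectory, with every non-source node lying on some
trajectory, then `Q` satisfies the flow matching conditions at every node, and hence
the induced policy `π(s'|s) = Q s s' / V s` samples each sink `x` with probability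
`R x / ∑ (x' sink), R x'`. -/
theorem zero_loss_implies_flow_matching_and_proportional_sampling
    {S : Type*} [Fintype S] [DecidableEq S]
    (succ : S → Finset S) (s₀ : S)
    (hacyc : ∀ s : S, ¬ Relation.TransGen (fun a b => b ∈ succ a) s s)
    (hsource : ∀ s : S, s₀ ∉ succ s)
    (R : S → ℝ)
    (hRsink : ∀ x : S, succ x = ∅ → 0 < R x)
    (hRnonsink : ∀ s : S, succ s ≠ ∅ → R s = 0)
    (Q : S → S → ℝ)
    (hQpos : ∀ s : S, ∀ s' ∈ succ s, 0 < Q s s')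
    (hL : ∀ τ : List S, τ.head? = some s₀ →
      τ.Chain' (fun a b => b ∈ succ a) →
      (∀ y : S, τ.getLast? = some y → succ y = ∅) →
      (τ.tail.map (fun s' =>
        ((∑ s ∈ Finset.univ.filter (fun s => s' ∈ succ s), Q s s')
          - R s' - ∑ s'' ∈ succ s', Q s' s'') ^ 2)).sum = 0)
    (hcov : ∀ s' : S, s' ≠ s₀ → ∃ τ : List S, τ.head? = some s₀ ∧
      τ.Chain' (fun a b => b ∈ succ a) ∧
      (∀ y : S, τ.getLast? = some y → succ y = ∅) ∧ s' ∈ τ)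
    (V : S → ℝ) (hV : ∀ s : S, V s = R s + ∑ s'' ∈ succ s, Q s s'')
    (π : S → ℝ) (hπ₀ : π s₀ = 1)
    (hπ : ∀ s' : S, s' ≠ s₀ →
      π s' = ∑ s ∈ Finset.univ.filter (fun s => s' ∈ succ s), Q s s' / V s * π s) :
    (∀ s' : S, s' ≠ s₀ →
      ∑ s ∈ Finset.univ.filter (fun s => s' ∈ succ s), Q s s'
        = R s' + ∑ s'' ∈ succ s', Q s' s'') ∧
    (∀ x : S, succ x = ∅ →
      π x = R x / ∑ x' ∈ Finset.univ.filter (fun x' : S => succ x' = ∅), R x') := by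
  -- Part 1: flow matching
  have flow : ∀ s' : S, s' ≠ s₀ →
      ∑ s ∈ Finset.univ.filter (fun s => s' ∈ succ s), Q s s'
        = R s' + ∑ s'' ∈ succ s', Q s' s'' := by
    intro s' hs'
    obtain ⟨τ, hhead, hchain, hlast, hmem⟩ := hcov s' hs'
    have hsum := hL τ hhead hchain hlast
    have hmem' : s' ∈ τ.tail := by
      cases τ with
      | nil => simp at hhead
      | cons a t =>
        simp only [List.head?_cons, Option.some.injEq] at hhead
        rcases List.mem_cons.mp hmem with rfl | h
        · exact absurd hhead hs'
        · exact h
    have h0 := sum_map_sq_eq_zero_aux τ.tail _ hsum s' hmem'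
    linarith
  -- Positivity of V
  have hVpos : ∀ s : S, 0 < V s := by
    intro s
    rw [hV s]
    by_cases hs : succ s = ∅
    · simp [hs, hRsink s hs]
    · have h1 : 0 < ∑ s'' ∈ succ s, Q s s'' :=
        Finset.sum_pos (fun i hi => hQpos s i hi) (Finset.nonempty_of_ne_empty hs)
      rw [hRnonsink s hs]; linarith
  -- π s = V s / V s₀
  let r : S → S → Prop := fun a b => Relation.TransGen (fun x y => y ∈ succ x) a b
  haveI : IsTrans S r := ⟨fun _ _ _ => Relation.TransGen.trans⟩
  haveI : IsIrrefl S r := ⟨hacyc⟩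
  have hwf : WellFounded r := Finite.wellFounded_of_trans_of_irrefl r
  have claim : ∀ s : S, π s = V s / V s₀ := by
    intro s
    refine hwf.induction (C := fun s => π s = V s / V s₀) s ?_
    intro s ih
    by_cases hs : s = s₀
    · rw [hs, hπ₀, div_self (ne_of_gt (hVpos s₀))]
    · rw [hπ s hs]
      have hcg : ∀ p ∈ Finset.univ.filter (fun p => s ∈ succ p),
          Q p s / V p * π p = Q p s / V s₀ := by
        intro p hp
        simp only [Finset.mem_filter, Finset.mem_univ, true_and] at hp
        rw [ih p (Relation.TransGen.single hp)]
        have hVp : V p ≠ 0 := ne_of_gt (hVpos p)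
        have hV0 : V s₀ ≠ 0 := ne_of_gt (hVpos s₀)
        field_simp
      rw [Finset.sum_congr rfl hcg, ← Finset.sum_div, flow s hs, ← hV]
  -- degenerate case: if s₀ is a sink, every node equals s₀
  have hdeg : succ s₀ = ∅ → ∀ s : S, s = s₀ := by
    intro h s
    by_contra hne
    obtain ⟨τ, hh, hc, -, hm⟩ := hcov s hne
    cases τ with
    | nil => simp at hh
    | cons a t =>
      simp only [List.head?_cons, Option.some.injEq] at hh
      cases t with
      | nil => simp only [List.mem_singleton] at hm; exact hne (hm.trans hh)
      | cons b t' =>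
        have hb : b ∈ succ a := (List.isChain_cons_cons.mp hc).1
        rw [hh, h] at hb
        exact absurd hb (Finset.notMem_empty b)
  refine ⟨flow, ?_⟩
  intro x hx
  by_cases hx0 : x = s₀
  · subst hx0
    have hall := hdeg hx
    have huniv : (Finset.univ.filter (fun x' : S => succ x' = ∅)) = {x} := by
      ext a
      simp [hall a, hx]
    rw [huniv, Finset.sum_singleton, hπ₀, div_self (ne_of_gt (hRsink x hx))]
  · -- s₀ is not a sink
    have hns : succ s₀ ≠ ∅ := fun h => hx0 (hdeg h x)
    -- V s₀ equals total reward of sinks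
    have hA : ∀ s : S, (Finset.univ.filter (fun s' => s' ≠ s₀)).filter
        (fun s' => s' ∈ succ s) = succ s := by
      intro s; ext a
      simp only [Finset.mem_filter, Finset.mem_univ, true_and]
      constructor
      · rintro ⟨-, h⟩; exact h
      · intro h; exact ⟨fun he => hsource s (he ▸ h), h⟩
    have hswap : ∑ s' ∈ Finset.univ.filter (fun s' => s' ≠ s₀),
        ∑ s ∈ Finset.univ.filter (fun s => s' ∈ succ s), Q s s'
        = ∑ s : S, ∑ s'' ∈ succ s, Q s s'' := by
      calc ∑ s' ∈ Finset.univ.filter (fun s' => s' ≠ s₀),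
            ∑ s ∈ Finset.univ.filter (fun s => s' ∈ succ s), Q s s'
          = ∑ s' ∈ Finset.univ.filter (fun s' => s' ≠ s₀),
            ∑ s : S, if s' ∈ succ s then Q s s' else 0 := by
            refine Finset.sum_congr rfl fun s' _ => ?_
            rw [Finset.sum_filter]
        _ = ∑ s : S, ∑ s' ∈ Finset.univ.filter (fun s' => s' ≠ s₀),
            if s' ∈ succ s then Q s s' else 0 := Finset.sum_comm
        _ = ∑ s : S, ∑ s'' ∈ succ s, Q s s'' := by
            refine Finset.sum_congr rfl fun s _ => ?_
            rw [← Finset.sum_filter, hA s]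
    have hsplit : ∑ s : S, ∑ s'' ∈ succ s, Q s s''
        = (∑ s'' ∈ succ s₀, Q s₀ s'')
          + ∑ s ∈ Finset.univ.filter (fun s' => s' ≠ s₀), ∑ s'' ∈ succ s, Q s s'' := by
      rw [Finset.filter_ne', ← Finset.add_sum_erase _ _ (Finset.mem_univ s₀)]
    have hflowsum : ∑ s' ∈ Finset.univ.filter (fun s' => s' ≠ s₀),
        ∑ s ∈ Finset.univ.filter (fun s => s' ∈ succ s), Q s s'
        = (∑ s' ∈ Finset.univ.filter (fun s' => s' ≠ s₀), R s')
          + ∑ s' ∈ Finset.univ.filter (fun s' => s' ≠ s₀), ∑ s'' ∈ succ s', Q s' s'' := by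
      rw [← Finset.sum_add_distrib]
      exact Finset.sum_congr rfl fun s' hs' => by
        simp only [Finset.mem_filter, Finset.mem_univ, true_and] at hs'
        exact flow s' hs'
    have hout0 : ∑ s'' ∈ succ s₀, Q s₀ s''
        = ∑ s' ∈ Finset.univ.filter (fun s' => s' ≠ s₀), R s' := by
      have := hswap
      rw [hflowsum, hsplit] at this
      linarith
    have hAuniv : ∑ s' ∈ Finset.univ.filter (fun s' => s' ≠ s₀), R s'
        = ∑ s' : S, R s' := by
      refine Finset.sum_subset (Finset.filter_subset _ _) fun a _ ha => ?_
      have h' : a = s₀ := by simpa using ha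
      rw [h']
      exact hRnonsink s₀ hns
    have hZuniv : ∑ x' ∈ Finset.univ.filter (fun x' : S => succ x' = ∅), R x'
        = ∑ x' : S, R x' := by
      refine Finset.sum_subset (Finset.filter_subset _ _) fun a _ ha => ?_
      exact hRnonsink a (by simpa using ha)
    have hVZ : V s₀ = ∑ x' ∈ Finset.univ.filter (fun x' : S => succ x' = ∅), R x' := by
      rw [hV s₀, hRnonsink s₀ hns, hout0, hAuniv, hZuniv, zero_add]
    rw [claim x, hVZ, hV x, hx]
    simp
end

section
/- In a finite deterministic tree-structured MDP with leaf rewards R and flow Q(s,a;R) defined by Q(s,a) = sum of leaf rewards below T(s,a), let μ be the uniform policy μ(a|s) = 1/|A(s)|, let f(x) = Π_{t=0}^{n} |A(s_t)| along the root-to-x path (s₀,…,s_n), and define the modified reward R̂(x) = R(x)·f(s_{n−1}). Then the action-value function of μ under R̂ satisfies Q^μ(s,a; R̂) = Q(s,a; R)·f(s) for all state-action pairs (s,a). -/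
/-- Finite deterministic tree-structured MDP (states: a prefix-closed
finite set `T` of action sequences, root the empty sequence; allowed actions at `s`
are those `a` with `s ++ [a] ∈ T`).  Given leaf rewards `R` and the flow
`Qf s a = ∑` of leaf rewards below `s ++ [a]`, let `μ` be the uniform policy
`μ(a|s) = 1/|A(s)|`, let `f s = ∏ₜ |A(sₜ)|` along the root-to-`s` path (including `s`),
and let the modified reward be `R̂ x = R x · f (parent of x)` at leaves `x` (and `0`
elsewhere).  Then the action-value function of `μ` under `R̂`, defined by
`Qμ s a = R̂ s' + (1/|A(s')|) ∑ₐ' Qμ s' a'` with `s' = s ++ [a]` (and `Qμ s a = R̂ s'`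
when `s'` is a leaf), satisfies `Qμ s a = Qf s a · f s` for all state-action pairs. -/
theorem uniform_policy_action_value_eq_flow
    {A : Type*} [Fintype A] [DecidableEq A]
    (T : Finset (List A)) (hroot : ([] : List A) ∈ T)
    (hpc : ∀ q ∈ T, ∀ p : List A, p <+: q → p ∈ T)
    (R : List A → ℝ)
    (hR : ∀ x ∈ T, (∀ a : A, x ++ [a] ∉ T) → 0 < R x)
    (Qf : List A → A → ℝ)
    (hQf : ∀ s ∈ T, ∀ a : A, s ++ [a] ∈ T →
      Qf s a = ∑ x ∈ (T.filter (fun x => ∀ b : A, x ++ [b] ∉ T)).filter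
        (fun x => s ++ [a] <+: x), R x)
    (f : List A → ℝ)
    (hf : ∀ s : List A, f s = ∏ i ∈ Finset.range (s.length + 1),
      ((Finset.univ.filter (fun a : A => s.take i ++ [a] ∈ T)).card : ℝ))
    (Rhat : List A → ℝ)
    (hRhatLeaf : ∀ x ∈ T, (∀ a : A, x ++ [a] ∉ T) → Rhat x = R x * f x.dropLast)
    (hRhatInner : ∀ s ∈ T, (∃ a : A, s ++ [a] ∈ T) → Rhat s = 0)
    (Qmu : List A → A → ℝ)
    (hQmuLeaf : ∀ s ∈ T, ∀ a : A, s ++ [a] ∈ T →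
      (∀ b : A, s ++ [a] ++ [b] ∉ T) → Qmu s a = Rhat (s ++ [a]))
    (hQmuRec : ∀ s ∈ T, ∀ a : A, s ++ [a] ∈ T →
      (∃ b : A, s ++ [a] ++ [b] ∈ T) →
      Qmu s a = Rhat (s ++ [a]) +
        (1 / ((Finset.univ.filter (fun b : A => s ++ [a] ++ [b] ∈ T)).card : ℝ)) *
          ∑ b ∈ Finset.univ.filter (fun b : A => s ++ [a] ++ [b] ∈ T),
            Qmu (s ++ [a]) b) :
    ∀ s ∈ T, ∀ a : A, s ++ [a] ∈ T → Qmu s a = Qf s a * f s := by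
  classical
  set L : Finset (List A) := T.filter (fun x => ∀ b : A, x ++ [b] ∉ T) with hL
  -- f step lemma
  have hfstep : ∀ (s : List A) (a : A),
      f (s ++ [a]) = f s *
        ((Finset.univ.filter (fun b : A => s ++ [a] ++ [b] ∈ T)).card : ℝ) := by
    intro s a
    rw [hf, hf]
    have hlen' : (s ++ [a]).length = s.length + 1 := by simp
    rw [hlen', Finset.prod_range_succ]
    congr 1
    · apply Finset.prod_congr rfl
      intro i hi
      simp only [Finset.mem_range] at hi
      have ht : (s ++ [a]).take i = s.take i :=
        List.take_append_of_le_length (by omega)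
      rw [ht]
    · have ht : (s ++ [a]).take (s.length + 1) = s ++ [a] := by
        rw [← hlen', List.take_length]
      rw [ht]
  -- leaf Qf
  have hQfLeaf : ∀ s ∈ T, ∀ a : A, s ++ [a] ∈ T →
      (∀ b : A, s ++ [a] ++ [b] ∉ T) → Qf s a = R (s ++ [a]) := by
    intro s hs a ha hleaf
    rw [hQf s hs a ha]
    have : L.filter (fun x => s ++ [a] <+: x) = {s ++ [a]} := by
      ext x
      simp only [Finset.mem_filter, Finset.mem_singleton, hL]
      constructor
      · rintro ⟨⟨hxT, hxleaf⟩, hpre⟩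
        by_contra hne
        obtain ⟨t, rfl⟩ := hpre
        cases t with
        | nil => simp at hne
        | cons b t' =>
          have : s ++ [a] ++ [b] <+: s ++ [a] ++ b :: t' := by
            refine ⟨t', by simp⟩
          exact hleaf b (hpc _ hxT _ this)
      · rintro rfl
        exact ⟨⟨ha, hleaf⟩, List.prefix_refl _⟩
    rw [this, Finset.sum_singleton]
  -- recursive Qf
  have hQfRec : ∀ s ∈ T, ∀ a : A, s ++ [a] ∈ T →
      (∃ b : A, s ++ [a] ++ [b] ∈ T) →
      Qf s a = ∑ b ∈ Finset.univ.filter (fun b : A => s ++ [a] ++ [b] ∈ T),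
        Qf (s ++ [a]) b := by
    intro s hs a ha ⟨b0, hb0⟩
    rw [hQf s hs a ha]
    have hrw : ∀ b ∈ Finset.univ.filter (fun b : A => s ++ [a] ++ [b] ∈ T),
        Qf (s ++ [a]) b = ∑ x ∈ L.filter (fun x => s ++ [a] ++ [b] <+: x), R x := by
      intro b hb
      simp only [Finset.mem_filter] at hb
      exact hQf (s ++ [a]) ha b hb.2
    rw [Finset.sum_congr rfl hrw, ← Finset.sum_biUnion]
    · congr 1
      ext x
      simp only [Finset.mem_biUnion, Finset.mem_filter, Finset.mem_univ, true_and]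
      constructor
      · rintro ⟨hxL, hpre⟩
        obtain ⟨t, rfl⟩ := hpre
        cases t with
        | nil =>
          exfalso
          have hxleaf : ∀ c : A, (s ++ [a] ++ ([] : List A)) ++ [c] ∉ T := by
            have := (Finset.mem_filter.mp hxL).2
            simpa using this
          simpa using hxleaf b0 (by simpa using hb0)
        | cons c t' =>
          refine ⟨c, ?_, hxL, ⟨t', by simp⟩⟩
          have := (Finset.mem_filter.mp hxL).1
          exact hpc _ this _ ⟨t', by simp⟩
      · rintro ⟨c, hc, hxL, hpre⟩
        refine ⟨hxL, ?_⟩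
        exact List.IsPrefix.trans ⟨[c], rfl⟩ hpre
    · intro b _ c _ hbc
      apply Finset.disjoint_left.mpr
      intro x hxb hxc
      simp only [Finset.mem_filter] at hxb hxc
      have h1 := hxb.2
      have h2 := hxc.2
      have : s ++ [a] ++ [b] <+: s ++ [a] ++ [c] :=
        List.prefix_of_prefix_length_le h1 h2 (by simp)
      have heq : s ++ [a] ++ [b] = s ++ [a] ++ [c] :=
        List.IsPrefix.eq_of_length this (by simp)
      exact hbc (by simpa using heq)
  -- main induction
  set N := T.sup (fun l => l.length) with hN
  have hlenN : ∀ x ∈ T, x.length ≤ N := fun x hx => Finset.le_sup hx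
  suffices H : ∀ k : ℕ, ∀ s ∈ T, ∀ a : A, s ++ [a] ∈ T → N - s.length ≤ k →
      Qmu s a = Qf s a * f s by
    intro s hs a ha
    exact H N s hs a ha (Nat.sub_le _ _)
  intro k
  induction k with
  | zero =>
    intro s hs a ha hk
    exfalso
    have h1 : (s ++ [a]).length ≤ N := hlenN _ ha
    simp only [List.length_append, List.length_singleton] at h1
    omega
  | succ k ih =>
    intro s hs a ha hk
    by_cases hleaf : ∀ b : A, s ++ [a] ++ [b] ∉ T
    · rw [hQmuLeaf s hs a ha hleaf, hRhatLeaf _ ha hleaf,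
        hQfLeaf s hs a ha hleaf]
      congr 1
      simp
    · push_neg at hleaf
      have hcard : 0 < (Finset.univ.filter (fun b : A => s ++ [a] ++ [b] ∈ T)).card := by
        obtain ⟨b, hb⟩ := hleaf
        exact Finset.card_pos.mpr ⟨b, Finset.mem_filter.mpr ⟨Finset.mem_univ _, hb⟩⟩
      have hcard' : ((Finset.univ.filter (fun b : A => s ++ [a] ++ [b] ∈ T)).card : ℝ) ≠ 0 := by
        exact_mod_cast hcard.ne'
      rw [hQmuRec s hs a ha hleaf, hRhatInner _ ha hleaf]
      have hsum : ∀ b ∈ Finset.univ.filter (fun b : A => s ++ [a] ++ [b] ∈ T),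
          Qmu (s ++ [a]) b = Qf (s ++ [a]) b * f (s ++ [a]) := by
        intro b hb
        simp only [Finset.mem_filter] at hb
        apply ih (s ++ [a]) ha b hb.2
        have h1 : (s ++ [a]).length ≤ N := hlenN _ ha
        simp only [List.length_append, List.length_singleton] at h1 ⊢
        omega
      rw [Finset.sum_congr rfl hsum, ← Finset.sum_mul, ← hQfRec s hs a ha hleaf,
        hfstep s a]
      simp only [List.append_assoc, List.singleton_append] at hcard'
      field_simp
      ring
end

section
/- In a finite DAG with single source s₀ and positive sink rewards, there always exists a positive flow Q on edges satisfying the flow matching conditions: for every non-source node, inflow equals R plus outflow, and for every sink x, the inflow equals R(x). -/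
open Finset

section Aux
variable {S : Type*} [Fintype S] [DecidableEq S]

/-- weighted count of paths from `s` to `t` in the DAG given by `succ`. -/
noncomputable def Nc (succ : S → Finset S)
    (w : WellFounded (fun a b : S => a ∈ succ b)) (t : S) : S → ℝ :=
  w.fix (fun s IH => (if s = t then 1 else 0) + ∑ s' ∈ (succ s).attach, IH s'.1 s'.2)

lemma Nc_eq (succ : S → Finset S) (w : WellFounded (fun a b : S => a ∈ succ b)) (t s : S) :
    Nc succ w t s = (if s = t then 1 else 0) + ∑ s' ∈ succ s, Nc succ w t s' := by
  rw [Nc, WellFounded.fix_eq]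
  simp only []
  rw [Finset.sum_attach]

lemma Nc_nonneg (succ : S → Finset S) (w : WellFounded (fun a b : S => a ∈ succ b))
    (t s : S) : 0 ≤ Nc succ w t s := by
  induction s using WellFounded.induction w with
  | _ s IH =>
    rw [Nc_eq]
    have h : 0 ≤ ∑ s' ∈ succ s, Nc succ w t s' :=
      Finset.sum_nonneg fun s' hs' => IH s' hs'
    have h2 : (0:ℝ) ≤ (if s = t then 1 else 0) := by split <;> norm_num
    linarith

lemma Nc_pos (succ : S → Finset S) (w : WellFounded (fun a b : S => a ∈ succ b))
    {s t : S} (h : Relation.ReflTransGen (fun a b => b ∈ succ a) s t) :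
    0 < Nc succ w t s := by
  induction h using Relation.ReflTransGen.head_induction_on with
  | refl =>
    rw [Nc_eq]
    have h : 0 ≤ ∑ s' ∈ succ t, Nc succ w t s' :=
      Finset.sum_nonneg fun s' _ => Nc_nonneg succ w t s'
    rw [if_pos rfl]
    linarith
  | head hab _ IH =>
    rename_i a c _
    rw [Nc_eq]
    have h2 : (0:ℝ) ≤ (if a = t then 1 else 0) := by split <;> norm_num
    have h3 : Nc succ w t c ≤ ∑ s' ∈ succ a, Nc succ w t s' :=
      Finset.single_le_sum (fun s' _ => Nc_nonneg succ w t s') hab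
    linarith

lemma Nc_pred (succ : S → Finset S) (w : WellFounded (fun a b : S => a ∈ succ b))
    (t s : S) :
    Nc succ w t s = (if s = t then 1 else 0)
      + ∑ u ∈ univ.filter (fun u => t ∈ succ u), Nc succ w u s := by
  induction s using WellFounded.induction w with
  | _ s IH =>
    rw [Nc_eq]
    have step1 : ∑ s' ∈ succ s, Nc succ w t s'
        = ∑ s' ∈ succ s, ((if s' = t then 1 else 0)
            + ∑ u ∈ univ.filter (fun u => t ∈ succ u), Nc succ w u s') :=
      Finset.sum_congr rfl fun s' hs' => IH s' hs'
    rw [step1, Finset.sum_add_distrib]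
    have step2 : ∑ s' ∈ succ s, (if s' = t then (1:ℝ) else 0)
        = if t ∈ succ s then 1 else 0 := Finset.sum_ite_eq' (succ s) t (fun _ => 1)
    rw [step2, Finset.sum_comm]
    have step3 : ∀ u ∈ univ.filter (fun u => t ∈ succ u),
        ∑ s' ∈ succ s, Nc succ w u s'
          = Nc succ w u s - (if s = u then 1 else 0) := by
      intro u _
      have := Nc_eq succ w u s
      linarith
    rw [Finset.sum_congr rfl step3, Finset.sum_sub_distrib]
    have step4 : ∑ u ∈ univ.filter (fun u => t ∈ succ u), (if s = u then (1:ℝ) else 0)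
        = if t ∈ succ s then 1 else 0 := by
      rw [Finset.sum_ite_eq (univ.filter (fun u => t ∈ succ u)) s (fun _ => 1)]
      simp
    rw [step4]
    ring

end Aux

/-- In a finite DAG with single source `s₀` (no incoming edges),
where every node is reachable from `s₀` and every node can reach some sink, and the
sinks carry rewards `R x > 0` (`R = 0` at non-sinks), there always exists a positive
flow `Q` on the edges satisfying the flow matching conditions: for every non-source
node, inflow equals `R` plus outflow (in particular, at every sink `x` the inflow
equals `R x`). -/
theorem exists_positive_matching_flow
    {S : Type*} [Fintype S] [DecidableEq S]
    (succ : S → Finset S) (s₀ : S)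
    (hacyc : ∀ s : S, ¬ Relation.TransGen (fun a b => b ∈ succ a) s s)
    (hsource : ∀ s : S, s₀ ∉ succ s)
    (hreach : ∀ s : S, Relation.ReflTransGen (fun a b => b ∈ succ a) s₀ s)
    (hterm : ∀ s : S, ∃ x : S, succ x = ∅ ∧
      Relation.ReflTransGen (fun a b => b ∈ succ a) s x)
    (R : S → ℝ)
    (hRsink : ∀ x : S, succ x = ∅ → 0 < R x)
    (hRnonsink : ∀ s : S, succ s ≠ ∅ → R s = 0) :
    ∃ Q : S → S → ℝ,
      (∀ s : S, ∀ s' ∈ succ s, 0 < Q s s') ∧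
      (∀ s' : S, s' ≠ s₀ →
        ∑ s ∈ Finset.univ.filter (fun s => s' ∈ succ s), Q s s'
          = R s' + ∑ s'' ∈ succ s', Q s' s'') := by
  classical
  -- well-foundedness of the child relation
  have w : WellFounded (fun a b : S => a ∈ succ b) := by
    have hwf : WellFounded (Relation.TransGen fun a b : S => a ∈ succ b) := by
      have hirr : IsIrrefl S (Relation.TransGen fun a b : S => a ∈ succ b) :=
        ⟨fun s h => hacyc s (Relation.transGen_swap.mp h)⟩
      have htr : IsTrans S (Relation.TransGen fun a b : S => a ∈ succ b) := inferInstance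
      exact Finite.wellFounded_of_trans_of_irrefl _
    exact Subrelation.wf (fun h => Relation.TransGen.single h) hwf
  set N : S → S → ℝ := fun t s => Nc succ w t s with hN
  set sinks : Finset S := Finset.univ.filter (fun x => succ x = ∅) with hsinks
  -- throughput at each node
  set T : S → ℝ := fun a => ∑ x ∈ sinks, R x * N x a / N x s₀ with hT
  have hNpos : ∀ {s t : S}, Relation.ReflTransGen (fun a b => b ∈ succ a) s t → 0 < N t s :=
    fun h => Nc_pos succ w h
  have hNnn : ∀ t s, 0 ≤ N t s := fun t s => Nc_nonneg succ w t s
  have hTnn : ∀ a, 0 ≤ T a := by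
    intro a
    refine Finset.sum_nonneg fun x hx => ?_
    have hxs : succ x = ∅ := (Finset.mem_filter.mp hx).2
    exact div_nonneg (mul_nonneg (hRsink x hxs).le (hNnn x a)) (hNnn x s₀)
  have hTpos : ∀ a, 0 < T a := by
    intro a
    obtain ⟨x, hxs, hxr⟩ := hterm a
    refine Finset.sum_pos' (fun y hy => ?_) ⟨x, ?_, ?_⟩
    · have hys : succ y = ∅ := (Finset.mem_filter.mp hy).2
      exact div_nonneg (mul_nonneg (hRsink y hys).le (hNnn y a)) (hNnn y s₀)
    · exact Finset.mem_filter.mpr ⟨Finset.mem_univ x, hxs⟩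
    · exact div_pos (mul_pos (hRsink x hxs) (hNpos hxr)) (hNpos (hreach x))
  refine ⟨fun s a => N s s₀ * T a, fun s s' _ => mul_pos (hNpos (hreach s)) (hTpos s'), ?_⟩
  intro s' hs'
  -- inflow
  have hin : ∑ s ∈ Finset.univ.filter (fun s => s' ∈ succ s), N s s₀ * T s'
      = N s' s₀ * T s' := by
    rw [← Finset.sum_mul]
    congr 1
    have := Nc_pred succ w s' s₀
    rw [if_neg (Ne.symm hs')] at this
    simpa [hN] using this.symm
  rw [hin]
  -- outflow
  have hout : ∑ s'' ∈ succ s', N s' s₀ * T s''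
      = N s' s₀ * ∑ x ∈ sinks, R x / N x s₀ * (N x s' - (if s' = x then 1 else 0)) := by
    rw [← Finset.mul_sum]
    congr 1
    rw [hT]
    rw [Finset.sum_comm]
    refine Finset.sum_congr rfl fun x hx => ?_
    have hrec := Nc_eq succ w x s'
    have hsum : ∑ s'' ∈ succ s', N x s'' = N x s' - (if s' = x then 1 else 0) := by
      simp only [hN]; linarith
    calc ∑ s'' ∈ succ s', R x * N x s'' / N x s₀
        = ∑ s'' ∈ succ s', R x / N x s₀ * N x s'' :=
          Finset.sum_congr rfl fun _ _ => by ring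
      _ = R x / N x s₀ * ∑ s'' ∈ succ s', N x s'' := (Finset.mul_sum _ _ _).symm
      _ = R x / N x s₀ * (N x s' - (if s' = x then 1 else 0)) := by rw [hsum]
  rw [hout]
  have hsplit : ∑ x ∈ sinks, R x / N x s₀ * (N x s' - (if s' = x then 1 else 0))
      = T s' - (if s' ∈ sinks then R s' / N s' s₀ else 0) := by
    have e1 : ∀ x ∈ sinks, R x / N x s₀ * (N x s' - (if s' = x then 1 else 0))
        = R x * N x s' / N x s₀ - (if s' = x then R x / N x s₀ else 0) := by
      intro x _; split <;> ring
    rw [Finset.sum_congr rfl e1, Finset.sum_sub_distrib,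
      Finset.sum_ite_eq sinks s' (fun x => R x / N x s₀)]
  rw [hsplit]
  by_cases hsk : succ s' = ∅
  · have hmem : s' ∈ sinks := Finset.mem_filter.mpr ⟨Finset.mem_univ s', hsk⟩
    rw [if_pos hmem]
    have hne : N s' s₀ ≠ 0 := (hNpos (hreach s')).ne'
    field_simp
    ring
  · have hmem : s' ∉ sinks := by
      intro h; exact hsk (Finset.mem_filter.mp h).2
    rw [if_neg hmem, hRnonsink s' hsk]
    ring
end
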